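/- Let V be a real inner product space and let P_1, …, P_N : V → V be linear maps that are orthogonal projections (each P_k is idempotent and self-adjoint, i.e., ⟨P_k u, v⟩ = ⟨u, P_k v⟩ for all u, v ∈ V) and pairwise commuting (P_j ∘ P_k = P_k ∘ P_j for all j, k). Given x ∈ V, define x_0 = x, x_k = P_k x_{k−1} for 1 ≤ k ≤ N, and per-step errors E_k = x_{k−1} − x_k. Then the errors E_1, …, E_N are pairwise orthogonal, and consequently ‖x − x_N‖² = Σ_{k=1}^{N} ‖E_k‖². -/

import Mathlib

open scoped RealInnerProductSpace

lemma norm_sq_sum_of_orthogonal {V : Type*} [NormedAddCommGroup V] [InnerProductSpace ℝ V]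
    {N : ℕ} (E : Fin N → V) (h : ∀ j k, j ≠ k → ⟪E j, E k⟫ = 0) :
    ‖∑ k, E k‖ ^ 2 = ∑ k, ‖E k‖ ^ 2 := by
  have := real_inner_self_eq_norm_sq (∑ k, E k)
  rw [← this, sum_inner]
  rw [Finset.sum_congr rfl (fun j _ => inner_sum Finset.univ E (E j))]
  rw [Finset.sum_congr rfl (fun j _ => Finset.sum_eq_single j
    (fun k _ hk => h j k (Ne.symm hk)) (by simp))]
  exact Finset.sum_congr rfl fun j _ => real_inner_self_eq_norm_sq (E j)

lemma tel {M : Type*} [AddCommGroup M] :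
    ∀ n (g : Fin (n + 1) → M), ∑ k : Fin n, (g k.castSucc - g k.succ) = g 0 - g (Fin.last n) := by
  intro n
  induction n with
  | zero => intro g; simp
  | succ n ih =>
    intro g
    rw [Fin.sum_univ_castSucc]
    have := ih (fun i => g i.castSucc)
    simp only [← Fin.succ_castSucc] at this ⊢
    rw [this]
    simp [Fin.succ_last]

/-- Applying a sequence of pairwise commuting orthogonal projections (idempotent and
self-adjoint linear maps) to `x` yields per-step errors `E k = x_{k-1} - x_k` that are
pairwise orthogonal, and consequently the total squared error is the sum of per-step
squared errors. -/
theorem errors_pairwise_orthogonal_of_commuting_projections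
    {V : Type*} [NormedAddCommGroup V] [InnerProductSpace ℝ V]
    (N : ℕ) (P : Fin N → V →ₗ[ℝ] V)
    (hidem : ∀ k, (P k) ∘ₗ (P k) = P k)
    (hsa : ∀ k, ∀ u v : V, ⟪P k u, v⟫ = ⟪u, P k v⟫)
    (hcomm : ∀ j k, (P j) ∘ₗ (P k) = (P k) ∘ₗ (P j))
    (x : V) (xs : Fin (N + 1) → V)
    (hx0 : xs 0 = x)
    (hstep : ∀ k : Fin N, xs k.succ = P k (xs k.castSucc))
    (E : Fin N → V)
    (hE : ∀ k : Fin N, E k = xs k.castSucc - xs k.succ) :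
    (∀ j k, j ≠ k → ⟪E j, E k⟫ = 0) ∧
      ‖x - xs (Fin.last N)‖ ^ 2 = ∑ k, ‖E k‖ ^ 2 := by
  -- P j fixes xs m for j < m
  have hfix : ∀ m : Fin (N + 1), ∀ j : Fin N, (j : ℕ) < (m : ℕ) → P j (xs m) = xs m := by
    intro m
    induction m using Fin.induction with
    | zero => intro j hj; simp at hj
    | succ i ih =>
      intro j hj
      rw [hstep i]
      rcases eq_or_lt_of_le (Nat.lt_succ_iff.mp (by rw [Fin.val_succ] at hj; omega)) with h | h
      · have : j = i := Fin.ext h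
        subst this
        exact congrArg (· (xs j.castSucc)) (hidem j)
      · have hc : P j (P i (xs i.castSucc)) = P i (P j (xs i.castSucc)) :=
          congrArg (· (xs i.castSucc)) (hcomm j i)
        rw [hc, ih j (by simpa using h)]
  -- P k kills E k
  have hkill : ∀ k : Fin N, P k (E k) = 0 := by
    intro k
    rw [hE k, map_sub, hstep k]
    have : P k (P k (xs k.castSucc)) = P k (xs k.castSucc) :=
      congrArg (· (xs k.castSucc)) (hidem k)
    rw [this, sub_self]
  -- orthogonality when j < k
  have horth : ∀ j k : Fin N, (j : ℕ) < (k : ℕ) → ⟪E j, E k⟫ = 0 := by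
    intro j k hjk
    have h1 : P j (E k) = E k := by
      rw [hE k, map_sub, hfix k.castSucc j (by simpa using hjk),
        hfix k.succ j (by simp; omega)]
    calc ⟪E j, E k⟫ = ⟪E j, P j (E k)⟫ := by rw [h1]
      _ = ⟪P j (E j), E k⟫ := (hsa j (E j) (E k)).symm
      _ = 0 := by rw [hkill j, inner_zero_left]
  have horth' : ∀ j k : Fin N, j ≠ k → ⟪E j, E k⟫ = 0 := by
    intro j k hjk
    rcases lt_or_gt_of_ne (fun h : (j : ℕ) = (k : ℕ) => hjk (Fin.ext h)) with h | h
    · exact horth j k h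
    · rw [real_inner_comm]; exact horth k j h
  refine ⟨horth', ?_⟩
  have htel : x - xs (Fin.last N) = ∑ k, E k := by
    have : ∑ k : Fin N, E k = ∑ k : Fin N, (xs k.castSucc - xs k.succ) :=
      Finset.sum_congr rfl fun k _ => hE k
    rw [this, tel N xs, ← hx0]
  rw [htel]
  exact norm_sq_sum_of_orthogonal E horth'
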